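/- Peeling preserves the multiset invariant: if an IBLT T equals Enc(S) for a finite set S of triples, and cell i of T contains exactly one triple (k,v,t) ∈ S (a correctly pure cell), then after outputting (k,v,t) and applying Update(T,(k,v),t), the resulting table equals Enc(S \ {(k,v,t)}). Hence, by induction, if the Peel process terminates with an empty (all-zero) table, the multiset of outputs is exactly S. -/
import Mathlib


/-- Contribution of a single key-value-tag triple `x` to an IBLT. -/
def insTable {K V G : Type*} [AddCommGroup K] [AddCommGroup V] [AddCommGroup G]
    {m q : ℕ} (h : Fin q → K → Fin m) (x : K × V × G) : Fin m → K × V × G :=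
  fun i => (Finset.univ.filter (fun j : Fin q => h j x.1 = i)).card • x

/-- The IBLT encoding of a finite set of key-value-tag triples. -/
def enc {K V G : Type*} [AddCommGroup K] [AddCommGroup V] [AddCommGroup G]
    {m q : ℕ} (h : Fin q → K → Fin m) (S : Finset (K × V × G)) :
    Fin m → K × V × G :=
  fun i => ∑ x ∈ S, insTable h x i

/-- XOR-update (self-inverse insertion/deletion) of a triple into an IBLT. -/
def update {K V G : Type*} [AddCommGroup K] [AddCommGroup V] [AddCommGroup G]
    {m q : ℕ} (h : Fin q → K → Fin m) (T : Fin m → K × V × G) (x : K × V × G) :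
    Fin m → K × V × G :=
  fun i => T i + insTable h x i

/-- Peeling preserves the invariant: if `T = Enc(S)` and cell `i` of `T`
contains exactly the single triple `x = (k,v,t) ∈ S` (a correctly pure cell),
then after outputting `x` and applying `Update(T, x)`, the resulting table
equals `Enc(S \ {x})`.  (Iterating this is why a successful Peel that ends at
the all-zero table outputs exactly `S`.) -/
theorem peel_step_invariant {K V G : Type*}
    [AddCommGroup K] [AddCommGroup V] [AddCommGroup G] [DecidableEq (K × V × G)]
    (hK : ∀ x : K, x + x = 0) (hV : ∀ x : V, x + x = 0) (hG : ∀ x : G, x + x = 0)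
    {m q : ℕ} (h : Fin q → K → Fin m)
    (S : Finset (K × V × G)) (T : Fin m → K × V × G)
    (hT : T = enc h S) (x : K × V × G) (hx : x ∈ S) (i : Fin m)
    (hpure : T i = x) :
    update h T x = enc h (S.erase x) := by
  have hxx : ∀ y : K × V × G, y + y = 0 := by
    rintro ⟨a, b, c⟩
    ext <;> simp [hK, hV, hG]
  funext j
  have hsum : ∑ y ∈ S, insTable h y j
      = (∑ y ∈ S.erase x, insTable h y j) + insTable h x j :=
    (Finset.sum_erase_add S _ hx).symm
  have hz : insTable h x j + insTable h x j = 0 := by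
    simp only [insTable, ← smul_add, hxx, smul_zero]
  simp [update, hT, enc, hsum, add_assoc, hz]
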